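/- Let {f_t : t ∈ T} be a family of functions on ℝⁿ with pointwise supremum f such that f** = sup_{t∈T} f_t**, and suppose f* is epi-pointed. Then epi f* = conv( cl( ∪_{t∈T} epi f_t* ) ) + (epi f*)_∞, where (epi f*)_∞ is the asymptotic (recession) cone of epi f*. -/

import Mathlib

/-!
Because `f** = sup_t f_t**`, every nonvertical hyperplane lying above all the sets `epi f_t*`
also lies above `epi f*`. Separating in `ℝⁿ × ℝ` (a vertical separating hyperplane is tilted
using a point where `f**` is finite) therefore gives `epi f* = cl conv ⋃_t epi f_t*`.

Epi-pointedness means that `f**` is bounded above near some `x₀`, so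
`f*(y) ≥ ⟪x₀, y⟫ + ρ ‖y‖ - M` with `ρ > 0`. A point of `epi f*` is a limit of convex
combinations `∑ wᵢ qᵢ` of `n + 2` points of `S = cl ⋃_t epi f_t*` (Carathéodory), and this
growth bound keeps the summands `wᵢ qᵢ` bounded. Along a convergent subsequence, a summand whose
weight has a positive limit tends to a weighted point of `S`, and one whose weight tends to zero
tends to an asymptotic direction of `epi f*`.
-/

open scoped RealInnerProductSpace Pointwise
open Set Filter

noncomputable section

/-- `En n` is the Euclidean space `ℝⁿ`. -/
abbrev En (n : ℕ) := EuclideanSpace ℝ (Fin n)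

/-- The epigraph of an extended-real-valued function. -/
def epiS {n : ℕ} (g : En n → EReal) : Set (En n × ℝ) := {p | g p.1 ≤ (p.2 : EReal)}

/-- The Fenchel conjugate `g*`. -/
def conjF {n : ℕ} (g : En n → EReal) (y : En n) : EReal :=
  ⨆ x, (⟪y, x⟫ : EReal) - g x

/-- The effective domain of `g`. -/
def dm {n : ℕ} (g : En n → EReal) : Set (En n) := {x | g x < ⊤}

/-- `g` is proper: never `-∞` and not identically `+∞`. -/
def ProperF {n : ℕ} (g : En n → EReal) : Prop := (∃ x, g x < ⊤) ∧ ∀ x, ⊥ < g x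

/-- The ε-subdifferential `∂_ε g(x)` (empty when `g x` is not finite). -/
def eSub {n : ℕ} (g : En n → EReal) (ε : ℝ) (x : En n) : Set (En n) :=
  {y | ∃ r : ℝ, g x = (r : EReal) ∧ ∀ z, ((⟪y, z - x⟫ + r - ε : ℝ) : EReal) ≤ g z}

/-- The indicator function `δ_A` (0 on `A`, `+∞` outside). -/
def indE {n : ℕ} (A : Set (En n)) (x : En n) : EReal :=
  Set.indicator Aᶜ (fun _ => (⊤ : EReal)) x

/-- The ε-normal set `N^ε_A(x) = ∂_ε δ_A(x)`. -/
def eNormal {n : ℕ} (A : Set (En n)) (ε : ℝ) (x : En n) : Set (En n) :=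
  eSub (indE A) ε x

/-- `Γ₀`: proper, lower semicontinuous, convex. -/
def Gamma0 {n : ℕ} (g : En n → EReal) : Prop :=
  ProperF g ∧ LowerSemicontinuous g ∧ Convex ℝ (epiS g)

/-- Epi-pointed: `g*` is proper with nonempty interior of its domain. -/
def EpiPointed {n : ℕ} (g : En n → EReal) : Prop :=
  ProperF (conjF g) ∧ (interior (dm (conjF g))).Nonempty

/-- The closed convex hull `c̄o g`: the function whose epigraph is the closed
convex hull of `epi g`. -/
def cchF {n : ℕ} (g : En n → EReal) (x : En n) : EReal :=
  sInf ((fun r : ℝ => (r : EReal)) '' {r | (x, r) ∈ closure (convexHull ℝ (epiS g))})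

/-- The convex hull `co g`: the function whose epigraph is the convex hull of `epi g`. -/
def coF {n : ℕ} (g : En n → EReal) (x : En n) : EReal :=
  sInf ((fun r : ℝ => (r : EReal)) '' {r | (x, r) ∈ convexHull ℝ (epiS g)})

/-- Membership in the generalized simplex `Δ(T)`. -/
def inSimplex {T : Type*} (l : T →₀ ℝ) : Prop :=
  (∀ t, 0 ≤ l t ∧ l t ≤ 1) ∧ (∑ t ∈ l.support, l t) = 1

/-- Membership in `Δ^ε(T)`. -/
def inDelta {T : Type*} (ε : ℝ) (e : T →₀ ℝ) : Prop :=
  (∀ t, 0 ≤ e t ∧ e t ≤ ε) ∧ (∑ t ∈ e.support, e t) = ε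

end

/-- The asymptotic (recession) cone `A_∞ = ⋂_{ε>0} cl((0,ε]·A)`. -/
def asympCone {n : ℕ} (A : Set (En n × ℝ)) : Set (En n × ℝ) :=
  ⋂ ε > (0:ℝ), closure (⋃ s ∈ Set.Ioc (0:ℝ) ε, s • A)

open scoped Topology
open Module

section Halfspace

variable {E : Type*} [NormedAddCommGroup E] [InnerProductSpace ℝ E]

lemma isClosed_setOf_inner_sub_le (x : E) (α : ℝ) :
    IsClosed {q : E × ℝ | ⟪x, q.1⟫ - q.2 ≤ α} :=
  isClosed_le (by fun_prop) continuous_const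

lemma convex_setOf_inner_sub_le (x : E) (α : ℝ) :
    Convex ℝ {q : E × ℝ | ⟪x, q.1⟫ - q.2 ≤ α} :=
  convex_halfSpace_le
    ((innerSL ℝ x).comp (ContinuousLinearMap.fst ℝ E ℝ) - ContinuousLinearMap.snd ℝ E ℝ).isLinear α

lemma exists_nonvertical_separation_of_pos {C : Set (E × ℝ)} {p : E × ℝ} {y : E} {k a : ℝ}
    (hk : 0 < k) (hC : ∀ q ∈ C, ⟪y, q.1⟫ - k * q.2 ≤ a) (hp : a < ⟪y, p.1⟫ - k * p.2) :
    ∃ (x : E) (α : ℝ), (∀ q ∈ C, ⟪x, q.1⟫ - q.2 ≤ α) ∧ α < ⟪x, p.1⟫ - p.2 := by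
  have key : ∀ q : E × ℝ, ⟪k⁻¹ • y, q.1⟫ - q.2 = k⁻¹ * (⟪y, q.1⟫ - k * q.2) := fun q => by
    rw [real_inner_smul_left]; field_simp
  refine ⟨k⁻¹ • y, k⁻¹ * a, fun q hq => ?_, ?_⟩ <;> rw [key]
  · exact mul_le_mul_of_nonneg_left (hC q hq) (inv_pos.2 hk).le
  · exact mul_lt_mul_of_pos_left hp (inv_pos.2 hk)

end Halfspace

section Conjugate

variable {n : ℕ}

lemma coe_inner_sub_le_conjF {g : En n → EReal} {q : En n × ℝ} (hq : q ∈ epiS g) (x : En n) :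
    ((⟪x, q.1⟫ - q.2 : ℝ) : EReal) ≤ conjF g x :=
  calc ((⟪x, q.1⟫ - q.2 : ℝ) : EReal) = (⟪x, q.1⟫ : EReal) - (q.2 : EReal) := rfl
    _ ≤ (⟪x, q.1⟫ : EReal) - g q.1 := EReal.sub_le_sub le_rfl hq
    _ ≤ conjF g x := le_iSup (fun y => (⟪x, y⟫ : EReal) - g y) q.1

lemma conjF_le_coe_iff {g : En n → EReal} {x : En n} {α : ℝ} :
    conjF g x ≤ α ↔ ∀ q ∈ epiS g, ⟪x, q.1⟫ - q.2 ≤ α := by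
  refine ⟨fun h q hq => EReal.coe_le_coe_iff.1 ((coe_inner_sub_le_conjF hq x).trans h),
    fun h => iSup_le fun y => EReal.sub_le_of_le_add ?_⟩
  have hy : ((⟪x, y⟫ - α : ℝ) : EReal) ≤ g y :=
    EReal.le_of_forall_lt_iff_le.1 fun r hr =>
      EReal.coe_le_coe_iff.2 (by linarith [h (y, r) hr.le])
  calc (⟪x, y⟫ : EReal) = ((α + (⟪x, y⟫ - α) : ℝ) : EReal) := by ring_nf
    _ ≤ α + g y := (EReal.coe_add _ _).trans_le (add_le_add le_rfl hy)

lemma epiS_conjF_eq_biInter (g : En n → EReal) :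
    epiS (conjF g) = ⋂ p ∈ epiS g, {q : En n × ℝ | ⟪p.1, q.1⟫ - q.2 ≤ p.2} := by
  ext q
  simp only [mem_iInter₂, mem_ofPred_eq, epiS, conjF_le_coe_iff (g := g), real_inner_comm q.1]
  exact forall₂_congr fun p _ => by constructor <;> intro h <;> linarith

lemma isClosed_epiS_conjF (g : En n → EReal) : IsClosed (epiS (conjF g)) := by
  rw [epiS_conjF_eq_biInter]
  exact isClosed_biInter fun p _ => isClosed_setOf_inner_sub_le p.1 p.2

lemma convex_epiS_conjF (g : En n → EReal) : Convex ℝ (epiS (conjF g)) := by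
  rw [epiS_conjF_eq_biInter]
  exact convex_iInter₂ fun p _ => convex_setOf_inner_sub_le p.1 p.2

lemma iUnion_epiS_conjF_subset {T : Type*} (f : T → En n → EReal) :
    ⋃ t, epiS (conjF (f t)) ⊆ epiS (conjF fun w => ⨆ t, f t w) :=
  iUnion_subset fun t _ hq => le_trans
    (iSup_mono fun x => EReal.sub_le_sub le_rfl (le_iSup (fun t => f t x) t)) hq

end Conjugate

section Separation

variable {E : Type*} [NormedAddCommGroup E] [InnerProductSpace ℝ E] [CompleteSpace E]

lemma StrongDual.exists_apply_eq_inner_add_mul (φ : StrongDual ℝ (E × ℝ)) :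
    ∃ y : E, ∀ q : E × ℝ, φ q = ⟪y, q.1⟫ + q.2 * φ (0, 1) := by
  refine ⟨(InnerProductSpace.toDual ℝ E).symm (φ.comp (ContinuousLinearMap.inl ℝ E ℝ)),
    fun q => ?_⟩
  have hq : q = ContinuousLinearMap.inl ℝ E ℝ q.1 + q.2 • ((0 : E), (1 : ℝ)) := by ext <;> simp
  conv_lhs => rw [hq]
  rw [map_add, map_smul, InnerProductSpace.toDual_symm_apply, smul_eq_mul]
  rfl

lemma exists_nonvertical_separation {C : Set (E × ℝ)} (hconv : Convex ℝ C) (hclosed : IsClosed C)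
    {q₀ : E × ℝ} (hray : ∀ μ : ℝ, 0 ≤ μ → q₀ + (0, μ) ∈ C)
    {x₀ : E} {β : ℝ} (hbound : ∀ q ∈ C, ⟪x₀, q.1⟫ - q.2 ≤ β) {p : E × ℝ} (hp : p ∉ C) :
    ∃ (x : E) (α : ℝ), (∀ q ∈ C, ⟪x, q.1⟫ - q.2 ≤ α) ∧ α < ⟪x, p.1⟫ - p.2 := by
  obtain ⟨φ, u, hφC, hφp⟩ := geometric_hahn_banach_closed_point hconv hclosed hp
  obtain ⟨y, hy⟩ := StrongDual.exists_apply_eq_inner_add_mul φ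
  set s := φ (0, 1)
  have hs : s ≤ 0 := by
    by_contra! hs
    have hq₀ : φ q₀ < u := by simpa [Prod.mk_zero_zero] using hφC _ (hray 0 le_rfl)
    have := hφC _ (hray ((u - φ q₀) / s) (div_nonneg (sub_pos.2 hq₀).le hs.le))
    rw [map_add, hy (0, _)] at this
    simp only [inner_zero_right, zero_add, div_mul_cancel₀ _ hs.ne'] at this
    linarith
  -- Adding a large multiple `t` of `φ` to the bound `(x₀, β)` keeps `p` separated, and since
  -- `s ≤ 0` the combined functional is still nonvertical.
  set D := β - ⟪x₀, p.1⟫ + p.2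
  set t := (|D| + 1) / (φ p - u)
  have ht : 0 < t := div_pos (by positivity) (sub_pos.2 hφp)
  have htp : D < t * (φ p - u) := by
    rw [div_mul_cancel₀ _ (sub_pos.2 hφp).ne']; linarith [le_abs_self D]
  have hcomb : ∀ q : E × ℝ, ⟪t • y + x₀, q.1⟫ - (1 - t * s) * q.2
      = t * φ q + (⟪x₀, q.1⟫ - q.2) := fun q => by
    rw [hy q, inner_add_left, real_inner_smul_left]; ring
  refine exists_nonvertical_separation_of_pos (y := t • y + x₀) (k := 1 - t * s) (a := t * u + β)
    (by nlinarith) (fun q hq => ?_) ?_ <;> rw [hcomb]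
  · nlinarith [hφC q hq, hbound q hq]
  · linarith

end Separation

section ClosedConvexHull

variable {n : ℕ} {T : Type*}

lemma epiS_conjF_subset_closure_convexHull {F : En n → EReal} {f : T → En n → EReal}
    (hbi : ∀ z, conjF (conjF F) z = ⨆ t, conjF (conjF (f t)) z)
    (hprop : ProperF (conjF (conjF F))) :
    epiS (conjF F) ⊆ closure (convexHull ℝ (⋃ t, epiS (conjF (f t)))) := by
  set C := closure (convexHull ℝ (⋃ t, epiS (conjF (f t))))
  have hsupC : ∀ t, epiS (conjF (f t)) ⊆ C := fun t q hq =>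
    subset_closure (subset_convexHull ℝ _ (mem_iUnion.2 ⟨t, hq⟩))
  obtain ⟨⟨x₀, hx₀⟩, hbot⟩ := hprop
  set β := (conjF (conjF F) x₀).toReal
  have hβ : conjF (conjF F) x₀ = β := (EReal.coe_toReal hx₀.ne (hbot x₀).ne').symm
  have hbound : ∀ q ∈ C, ⟪x₀, q.1⟫ - q.2 ≤ β := by
    refine fun q hq => closure_minimal (convexHull_min (iUnion_subset fun t => ?_)
      (convex_setOf_inner_sub_le x₀ β)) (isClosed_setOf_inner_sub_le x₀ β) hq
    exact conjF_le_coe_iff.1 <|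
      (le_iSup (fun t => conjF (conjF (f t)) x₀) t).trans (hbi x₀ ▸ hβ.le)
  obtain ⟨t, q₀, hq₀, -⟩ : ∃ t, ∃ q ∈ epiS (conjF (f t)), β - 1 < ⟪x₀, q.1⟫ - q.2 := by
    have : (β - 1 : ℝ) < ⨆ t, conjF (conjF (f t)) x₀ := by
      rw [← hbi, hβ]; exact EReal.coe_lt_coe_iff.2 (by linarith)
    obtain ⟨t, ht⟩ := lt_iSup_iff.1 this
    have h := ht.not_ge
    rw [conjF_le_coe_iff] at h
    push Not at h
    exact ⟨t, h⟩
  have hray : ∀ μ : ℝ, 0 ≤ μ → q₀ + (0, μ) ∈ C := fun μ hμ =>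
    hsupC t <| by
      simpa [epiS] using hq₀.trans (EReal.coe_le_coe_iff.2 (le_add_of_nonneg_right hμ))
  intro p hp
  by_contra hpC
  obtain ⟨x, α, hC, hpα⟩ := exists_nonvertical_separation (convex_convexHull ℝ _).closure
    isClosed_closure hray hbound hpC
  have hFx : conjF (conjF F) x ≤ α :=
    hbi x ▸ iSup_le fun t => conjF_le_coe_iff.2 fun q hq => hC q (hsupC t hq)
  exact hpα.not_ge (EReal.coe_le_coe_iff.1 ((coe_inner_sub_le_conjF hp x).trans hFx))

end ClosedConvexHull

section Coercivity

variable {n : ℕ}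

lemma convexOn_toReal_dm {g : En n → EReal} (hconv : Convex ℝ (epiS g)) (hbot : ∀ x, ⊥ < g x) :
    ConvexOn ℝ (dm g) fun x => (g x).toReal := by
  have hmem : ∀ z ∈ dm g, (z, (g z).toReal) ∈ epiS g := fun z hz =>
    (EReal.coe_toReal (ne_of_lt hz) (hbot z).ne').ge
  have key : ∀ x ∈ dm g, ∀ y ∈ dm g, ∀ a b : ℝ, 0 ≤ a → 0 ≤ b → a + b = 1 →
      g (a • x + b • y) ≤ ((a * (g x).toReal + b * (g y).toReal : ℝ) : EReal) :=
    fun x hx y hy a b ha hb hab => by simpa [epiS] using hconv (hmem x hx) (hmem y hy) ha hb hab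
  refine ⟨fun x hx y hy a b ha hb hab =>
    (key x hx y hy a b ha hb hab).trans_lt (EReal.coe_lt_top _), fun x hx y hy a b ha hb hab => ?_⟩
  simpa only [smul_eq_mul, EReal.toReal_coe] using
    EReal.toReal_le_toReal (key x hx y hy a b ha hb hab) (hbot _).ne' (EReal.coe_ne_top _)

lemma exists_norm_le_inner_eq {E : Type*} [NormedAddCommGroup E] [InnerProductSpace ℝ E]
    (y : E) {ρ : ℝ} (hρ : 0 ≤ ρ) : ∃ u : E, ‖u‖ ≤ ρ ∧ ⟪u, y⟫ = ρ * ‖y‖ := by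
  rcases eq_or_ne y 0 with rfl | hy
  · exact ⟨0, by simpa using hρ, by simp⟩
  have hy' : ‖y‖ ≠ 0 := norm_ne_zero_iff.2 hy
  refine ⟨(ρ / ‖y‖) • y, ?_, ?_⟩
  · rw [norm_smul, Real.norm_eq_abs, abs_of_nonneg (by positivity), div_mul_cancel₀ _ hy']
  · rw [real_inner_smul_left, real_inner_self_eq_norm_sq]; field_simp

lemma EpiPointed.exists_coercive_bound {h : En n → EReal} (hep : EpiPointed h) :
    ∃ (x₀ : En n) (ρ M : ℝ), 0 < ρ ∧ ∀ p ∈ epiS h, ⟪x₀, p.1⟫ + ρ * ‖p.1‖ - p.2 ≤ M := by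
  obtain ⟨⟨-, hbot⟩, x₀, hx₀⟩ := hep
  set φ := fun x => (conjF h x).toReal
  have hcont : ContinuousAt φ x₀ :=
    ((convexOn_toReal_dm (convex_epiS_conjF h) hbot).continuousOn_interior x₀ hx₀).continuousAt
      (isOpen_interior.mem_nhds hx₀)
  -- `h*` is finite and bounded above on a ball around `x₀`
  obtain ⟨r, hr, hball⟩ := Metric.mem_nhds_iff.1 (inter_mem (isOpen_interior.mem_nhds hx₀)
    (hcont.preimage_mem_nhds (Iio_mem_nhds (lt_add_one (φ x₀)))))
  refine ⟨x₀, r / 2, φ x₀ + 1, by positivity, fun p hp => ?_⟩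
  obtain ⟨u, hu, hup⟩ := exists_norm_le_inner_eq p.1 (by positivity : (0 : ℝ) ≤ r / 2)
  obtain ⟨hdm, hlt⟩ := hball (show x₀ + u ∈ Metric.ball x₀ r by
    simpa using hu.trans_lt (half_lt_self hr))
  have hM : conjF h (x₀ + u) ≤ ((φ x₀ + 1 : ℝ) : EReal) := by
    have hfin : x₀ + u ∈ dm (conjF h) := interior_subset hdm
    rw [← EReal.coe_toReal (ne_of_lt hfin) (hbot _).ne']
    exact EReal.coe_le_coe_iff.2 hlt.le
  have := conjF_le_coe_iff.1 hM p hp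
  rw [inner_add_left, hup] at this
  linarith

lemma EpiPointed.exists_norm_le {h : En n → EReal} (hep : EpiPointed h) :
    ∃ (L : En n × ℝ →L[ℝ] ℝ) (c : ℝ), ∀ p ∈ epiS h, ‖p‖ ≤ L p + c := by
  obtain ⟨x₀, ρ, M, hρ, hcoer⟩ := hep.exists_coercive_bound
  set ℓ : En n × ℝ →L[ℝ] ℝ :=
    ContinuousLinearMap.snd ℝ (En n) ℝ - (innerSL ℝ x₀).comp (ContinuousLinearMap.fst ℝ (En n) ℝ)
  set K := (1 + ‖x₀‖) / ρ
  refine ⟨(K + 1) • ℓ, K * M + 2 * |M|, fun p hp => ?_⟩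
  have hℓ : ℓ p = p.2 - ⟪x₀, p.1⟫ := rfl
  have h₁ := hcoer p hp
  have hN : (1 + ‖x₀‖) * ‖p.1‖ ≤ K * (ℓ p + M) := by
    rw [show (1 + ‖x₀‖) * ‖p.1‖ = K * (ρ * ‖p.1‖) by simp only [K]; field_simp]
    exact mul_le_mul_of_nonneg_left (by linarith) (by positivity)
  have h₂ : |p.2| ≤ |ℓ p| + ‖x₀‖ * ‖p.1‖ := by
    rw [show p.2 = ℓ p + ⟪x₀, p.1⟫ by rw [hℓ]; ring]
    exact (abs_add_le _ _).trans (by gcongr; exact abs_real_inner_le_norm _ _)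
  have h₃ : |ℓ p| ≤ ℓ p + 2 * |M| := by
    rw [abs_le]; constructor <;>
      nlinarith [neg_abs_le M, le_abs_self M, mul_nonneg hρ.le (norm_nonneg p.1)]
  have h₄ : ‖p‖ ≤ ‖p.1‖ + |p.2| := by
    rw [Prod.norm_def, Real.norm_eq_abs]
    exact max_le (by linarith [abs_nonneg p.2]) (by linarith [norm_nonneg p.1])
  change ‖p‖ ≤ (K + 1) * ℓ p + _
  nlinarith

end Coercivity

section AsymptoticCone

variable {n : ℕ} {A : Set (En n × ℝ)}

lemma smul_mem_closure_iUnion_Ioc_smul {a : En n × ℝ} (ha : a ∈ A) {s ε : ℝ} (hs : 0 ≤ s)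
    (hsε : s < ε) : s • a ∈ closure (⋃ t ∈ Ioc (0 : ℝ) ε, t • A) := by
  refine mem_closure_of_tendsto (((continuous_id.smul continuous_const).tendsto s).mono_left
    (nhdsWithin_le_nhds : 𝓝[>] s ≤ 𝓝 s)) ?_
  filter_upwards [Ioo_mem_nhdsGT hsε] with t ht
  exact mem_iUnion₂.2 ⟨t, ⟨hs.trans_lt ht.1, ht.2.le⟩, smul_mem_smul_set ha⟩

lemma asympCone_mem_of_tendsto {a : ℕ → En n × ℝ} {s : ℕ → ℝ} {v : En n × ℝ}
    (ha : ∀ k, a k ∈ A) (hs : ∀ k, 0 ≤ s k) (hs0 : Tendsto s atTop (𝓝 0))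
    (hv : Tendsto (fun k => s k • a k) atTop (𝓝 v)) : v ∈ asympCone A :=
  mem_iInter₂.2 fun _ hε => isClosed_closure.mem_of_tendsto hv <|
    (hs0.eventually (gt_mem_nhds hε)).mono fun k hk =>
      smul_mem_closure_iUnion_Ioc_smul (ha k) (hs k) hk

lemma zero_mem_asympCone (hA : A.Nonempty) : (0 : En n × ℝ) ∈ asympCone A := by
  obtain ⟨a, ha⟩ := hA
  exact asympCone_mem_of_tendsto (fun _ => ha) (fun _ => le_rfl) tendsto_const_nhds
    (by simp)

lemma add_mem_asympCone (hconv : Convex ℝ A) {d₁ d₂ : En n × ℝ} (h₁ : d₁ ∈ asympCone A)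
    (h₂ : d₂ ∈ asympCone A) : d₁ + d₂ ∈ asympCone A := by
  refine mem_iInter₂.2 fun ε hε => map_mem_closure₂ continuous_add
    (mem_iInter₂.1 h₁ _ (half_pos hε)) (mem_iInter₂.1 h₂ _ (half_pos hε)) fun b₁ hb₁ b₂ hb₂ => ?_
  obtain ⟨s₁, hs₁, hb₁⟩ := mem_iUnion₂.1 hb₁
  obtain ⟨s₂, hs₂, hb₂⟩ := mem_iUnion₂.1 hb₂
  refine mem_iUnion₂.2 ⟨s₁ + s₂, ⟨add_pos hs₁.1 hs₂.1, by linarith [hs₁.2, hs₂.2]⟩, ?_⟩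
  rw [hconv.add_smul hs₁.1.le hs₂.1.le]
  exact add_mem_add hb₁ hb₂

lemma sum_mem_asympCone (hconv : Convex ℝ A) (hA : A.Nonempty) {ι : Type*} (t : Finset ι)
    (v : ι → En n × ℝ) (hv : ∀ i ∈ t, v i ∈ asympCone A) : ∑ i ∈ t, v i ∈ asympCone A :=
  Finset.sum_induction v (· ∈ asympCone A) (fun _ _ => add_mem_asympCone hconv)
    (zero_mem_asympCone hA) hv

lemma add_mem_of_mem_asympCone (hcl : IsClosed A) (hconv : Convex ℝ A) {a d : En n × ℝ}
    (ha : a ∈ A) (hd : d ∈ asympCone A) : a + d ∈ A := by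
  rw [← hcl.closure_eq, Metric.mem_closure_iff]
  intro δ hδ
  obtain ⟨ε, hε, hεa⟩ := exists_pos_mul_lt (half_pos hδ) ‖a‖
  obtain ⟨b, hb, hdb⟩ := Metric.mem_closure_iff.1
    (mem_iInter₂.1 hd (min ε 1) (lt_min hε one_pos)) (δ / 2) (half_pos hδ)
  obtain ⟨s, hs, c, hc, rfl⟩ : ∃ s ∈ Ioc 0 (min ε 1), ∃ c ∈ A, s • c = b := by
    simpa [mem_smul_set] using hb
  have hs1 : s ≤ 1 := hs.2.trans (min_le_right _ _)
  refine ⟨(1 - s) • a + s • c, hconv ha hc (by linarith) hs.1.le (by ring), ?_⟩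
  calc dist (a + d) ((1 - s) • a + s • c) = ‖(d - s • c) + s • a‖ := by
        rw [dist_eq_norm]; congr 1; module
    _ ≤ ‖d - s • c‖ + ‖s • a‖ := norm_add_le _ _
    _ = dist d (s • c) + s * ‖a‖ := by
        rw [dist_eq_norm, norm_smul, Real.norm_eq_abs, abs_of_pos hs.1]
    _ < δ / 2 + δ / 2 := by
        have : s * ‖a‖ ≤ ε * ‖a‖ :=
          mul_le_mul_of_nonneg_right (hs.2.trans (min_le_left _ _)) (norm_nonneg a)
        linarith
    _ = δ := add_halves δ

end AsymptoticCone

section Decomposition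

variable {V : Type*} [NormedAddCommGroup V] [NormedSpace ℝ V]

lemma norm_smul_le_of_forall_norm_le {ι : Type*} [Fintype ι] {A : Set V} {L : V →L[ℝ] ℝ} {c : ℝ}
    (hcoer : ∀ q ∈ A, ‖q‖ ≤ L q + c) {w : ι → ℝ} {q : ι → V} (hw0 : ∀ i, 0 ≤ w i)
    (hw1 : ∑ i, w i = 1) (hq : ∀ i, q i ∈ A) (i : ι) :
    ‖w i • q i‖ ≤ L (∑ j, w j • q j) + c := by
  have hsum : ∑ j, w j * (L (q j) + c) = L (∑ j, w j • q j) + c := by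
    simp [mul_add, Finset.sum_add_distrib, ← Finset.sum_mul, hw1, map_sum]
  rw [norm_smul, Real.norm_eq_abs, abs_of_nonneg (hw0 i), ← hsum]
  exact (mul_le_mul_of_nonneg_left (hcoer _ (hq i)) (hw0 i)).trans <|
    Finset.single_le_sum (fun j _ => mul_nonneg (hw0 j) ((norm_nonneg _).trans (hcoer _ (hq j))))
      (Finset.mem_univ i)

lemma inv_smul_mem_of_tendsto {S : Set V} (hS : IsClosed S) {a : ℕ → V} {t : ℕ → ℝ} {τ : ℝ}
    {v : V} (ha : ∀ k, a k ∈ S) (ht : Tendsto t atTop (𝓝 τ)) (hτ : τ ≠ 0)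
    (hv : Tendsto (fun k => t k • a k) atTop (𝓝 v)) : τ⁻¹ • v ∈ S :=
  hS.mem_of_tendsto (((ht.inv₀ hτ).smul hv).congr' <|
    (ht.eventually_ne hτ).mono fun k hk => inv_smul_smul₀ hk (a k)) (Eventually.of_forall ha)

lemma exists_fin_convexCombination [FiniteDimensional ℝ V] {s : Set V} {x : V}
    (hx : x ∈ convexHull ℝ s) :
    ∃ (w : Fin (finrank ℝ V + 1) → ℝ) (q : Fin (finrank ℝ V + 1) → V),
      (∀ i, 0 ≤ w i) ∧ ∑ i, w i = 1 ∧ (∀ i, q i ∈ s) ∧ ∑ i, w i • q i = x := by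
  obtain ⟨ι, _, z, w, hzs, hind, hw0, hw1, hwz⟩ := eq_pos_convex_span_of_mem_convexHull hx
  obtain ⟨s₀, hs₀⟩ := convexHull_nonempty_iff.1 ⟨x, hx⟩
  have hcard : Fintype.card ι ≤ finrank ℝ V + 1 :=
    hind.card_le_finrank_succ.trans (by gcongr; exact Submodule.finrank_le _)
  set e : ι ↪ Fin (finrank ℝ V + 1) :=
    (Fintype.equivFin ι).toEmbedding.trans (Fin.castLEEmb hcard)
  refine ⟨Function.extend e w 0, Function.extend e z fun _ => s₀, fun i => ?_, ?_, fun i => ?_, ?_⟩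
  · rcases range_extend_subset e w 0 (mem_range_self i) with ⟨j, hj⟩ | ⟨_, -, hj⟩ <;> rw [← hj]
    exacts [(hw0 j).le, le_rfl]
  · rw [← hw1]
    exact (Fintype.sum_of_injective e e.injective w (Function.extend e w 0)
      (fun i hi => Function.extend_apply' w _ i hi)
      fun j => (e.injective.extend_apply w _ j).symm).symm
  · rcases range_extend_subset e z _ (mem_range_self i) with ⟨j, hj⟩ | ⟨_, -, hj⟩ <;> rw [← hj]
    exacts [hzs (mem_range_self j), hs₀]
  · rw [← hwz]
    refine (Fintype.sum_of_injective e e.injective _ _ (fun i hi => ?_) fun j => ?_).symm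
    · rw [Function.extend_apply' _ _ _ hi, Pi.zero_apply, zero_smul]
    · rw [e.injective.extend_apply, e.injective.extend_apply]

end Decomposition

section ConvexHullAddAsympCone

variable {n : ℕ} {A S : Set (En n × ℝ)}

lemma sum_mem_convexHull_add_asympCone (hconv : Convex ℝ A) (hA : A.Nonempty) {ι : Type*}
    [Fintype ι] {w : ι → ℝ} {v : ι → En n × ℝ} (hw0 : ∀ i, 0 ≤ w i) (hw1 : ∑ i, w i = 1)
    (hpos : ∀ i, 0 < w i → (w i)⁻¹ • v i ∈ S) (hzero : ∀ i, w i = 0 → v i ∈ asympCone A) :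
    ∑ i, v i ∈ convexHull ℝ S + asympCone A := by
  classical
  rw [← Finset.sum_filter_add_sum_filter_not Finset.univ (fun i => 0 < w i)]
  refine add_mem_add ?_ (sum_mem_asympCone hconv hA _ _ fun i hi =>
    hzero i (le_antisymm (not_lt.1 (Finset.mem_filter.1 hi).2) (hw0 i)))
  have hw1' : ∑ i with 0 < w i, w i = 1 := by
    rw [← hw1, Finset.sum_filter_of_ne fun i _ hi => (hw0 i).lt_of_ne' hi]
  rw [Finset.sum_congr rfl fun i hi => (smul_inv_smul₀ (Finset.mem_filter.1 hi).2.ne' (v i)).symm]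
  exact (convex_convexHull ℝ S).sum_mem (fun i _ => hw0 i) hw1' fun i hi =>
    subset_convexHull ℝ S (hpos i (Finset.mem_filter.1 hi).2)

lemma subset_convexHull_add_asympCone (hconv : Convex ℝ A) (hS : IsClosed S) (hSA : S ⊆ A)
    (hAS : A ⊆ closure (convexHull ℝ S)) {L : En n × ℝ →L[ℝ] ℝ} {c : ℝ}
    (hcoer : ∀ q ∈ A, ‖q‖ ≤ L q + c) : A ⊆ convexHull ℝ S + asympCone A := by
  intro p hp
  obtain ⟨pk, hpk, hlim⟩ := mem_closure_iff_seq_limit.1 (hAS hp)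
  choose w q hw0 hw1 hqS hwq using fun k => exists_fin_convexCombination (hpk k)
  obtain ⟨B, hB⟩ := ((L.continuous.tendsto p).comp hlim).bddAbove_range
  have hbdd : Bornology.IsBounded (range fun k => (w k, fun i => w k i • q k i)) := by
    refine isBounded_iff_forall_norm_le.2 ⟨max 1 (B + c), forall_mem_range.2 fun k => ?_⟩
    refine max_le ((pi_norm_le_iff_of_nonneg (by positivity)).2 fun i => le_max_of_le_left ?_)
      ((pi_norm_le_iff_of_nonneg (by positivity)).2 fun i => le_max_of_le_right ?_)
    · rw [Real.norm_eq_abs, abs_of_nonneg (hw0 k i), ← hw1 k]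
      exact Finset.single_le_sum (fun j _ => hw0 k j) (Finset.mem_univ i)
    · have hLk : L (pk k) ≤ B := hB (mem_range_self k)
      calc ‖w k i • q k i‖ ≤ L (pk k) + c :=
            hwq k ▸ norm_smul_le_of_forall_norm_le hcoer (hw0 k) (hw1 k) (fun i => hSA (hqS k i)) i
        _ ≤ B + c := by linarith
  obtain ⟨⟨wb, v⟩, -, θ, hθ, hlimθ⟩ := tendsto_subseq_of_bounded hbdd fun k => mem_range_self k
  have hw : ∀ i, Tendsto (fun k => w (θ k) i) atTop (𝓝 (wb i)) :=
    tendsto_pi_nhds.1 ((continuous_fst.tendsto _).comp hlimθ)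
  have hv : ∀ i, Tendsto (fun k => w (θ k) i • q (θ k) i) atTop (𝓝 (v i)) :=
    tendsto_pi_nhds.1 ((continuous_snd.tendsto _).comp hlimθ)
  have hpv : ∑ i, v i = p := tendsto_nhds_unique (tendsto_finsetSum _ fun i _ => hv i)
    (by simp only [hwq]; exact hlim.comp hθ.tendsto_atTop)
  have hwb1 : ∑ i, wb i = 1 := tendsto_nhds_unique (tendsto_finsetSum _ fun i _ => hw i)
    (by simpa only [hw1] using tendsto_const_nhds)
  rw [← hpv]
  refine sum_mem_convexHull_add_asympCone hconv ⟨p, hp⟩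
    (fun i => ge_of_tendsto' (hw i) fun k => hw0 _ i) hwb1 (fun i hi => ?_) fun i hi => ?_
  · exact inv_smul_mem_of_tendsto hS (fun k => hqS (θ k) i) (hw i) hi.ne' (hv i)
  · exact asympCone_mem_of_tendsto (fun k => hSA (hqS (θ k) i)) (fun k => hw0 _ i)
      (hi ▸ hw i) (hv i)

lemma eq_convexHull_add_asympCone (hcl : IsClosed A) (hconv : Convex ℝ A) (hS : IsClosed S)
    (hSA : S ⊆ A) (hAS : A ⊆ closure (convexHull ℝ S)) {L : En n × ℝ →L[ℝ] ℝ} {c : ℝ}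
    (hcoer : ∀ q ∈ A, ‖q‖ ≤ L q + c) : A = convexHull ℝ S + asympCone A :=
  (subset_convexHull_add_asympCone hconv hS hSA hAS hcoer).antisymm <| add_subset_iff.2
    fun _ ha _ hd => add_mem_of_mem_asympCone hcl hconv (convexHull_min hSA hconv ha) hd

end ConvexHullAddAsympCone

/-- if `f** = sup_t f_t**` and `f*` is epi-pointed, then
`epi f* = conv (cl (⋃_t epi f_t*)) + (epi f*)_∞`. -/
theorem statement18 {n : ℕ} {T : Type*} (f : T → En n → EReal)
    (hbi : ∀ z, conjF (conjF (fun w => ⨆ t, f t w)) z = ⨆ t, conjF (conjF (f t)) z)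
    (hep : EpiPointed (conjF (fun w => ⨆ t, f t w))) :
    epiS (conjF (fun w => ⨆ t, f t w)) =
      convexHull ℝ (closure (⋃ t, epiS (conjF (f t)))) +
        asympCone (epiS (conjF (fun w => ⨆ t, f t w))) := by
  have hSA : closure (⋃ t, epiS (conjF (f t))) ⊆ epiS (conjF fun w => ⨆ t, f t w) :=
    closure_minimal (iUnion_epiS_conjF_subset f) (isClosed_epiS_conjF _)
  have hAS := (epiS_conjF_subset_closure_convexHull hbi hep.1).trans
    (closure_mono (convexHull_mono subset_closure))
  obtain ⟨L, c, hcoer⟩ := hep.exists_norm_le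
  exact eq_convexHull_add_asympCone (isClosed_epiS_conjF _) (convex_epiS_conjF _)
    isClosed_closure hSA hAS hcoer
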